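/- For λ ∈ (1,2) define R(λ) := ∑_{i=1}^∞ 1/a_i(λ), where a_1(λ) = 1 and a_{i+1}(λ) = ⌈λ·a_i(λ)⌉. Then R(λ) tends to +∞ as λ → 1 from the right. -/
import Mathlib


open Filter

/-- The sequence `a₁ = 1`, `a_{i+1} = ⌈λ a_i⌉`, indexed from `0`
(so `aSeq lam i` is `a_{i+1}` of the paper). -/
noncomputable def aSeq (lam : ℝ) : ℕ → ℕ
  | 0 => 1
  | i + 1 => ⌈lam * (aSeq lam i : ℝ)⌉₊

lemma aSeq_pos {lam : ℝ} (h : 1 ≤ lam) (i : ℕ) : 0 < aSeq lam i := by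
  induction i with
  | zero => simp [aSeq]
  | succ i ih =>
    have hx : (0:ℝ) < lam * (aSeq lam i : ℝ) := by
      have : (0:ℝ) < (aSeq lam i : ℝ) := by exact_mod_cast ih
      nlinarith
    simpa [aSeq, Nat.lt_ceil] using hx

lemma aSeq_ge_pow {lam : ℝ} (h : 1 ≤ lam) (i : ℕ) : lam ^ i ≤ (aSeq lam i : ℝ) := by
  induction i with
  | zero => simp [aSeq]
  | succ i ih =>
    have hle : lam * lam ^ i ≤ lam * (aSeq lam i : ℝ) := by
      apply mul_le_mul_of_nonneg_left ih (by linarith)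
    calc lam ^ (i+1) = lam * lam ^ i := by ring
      _ ≤ lam * (aSeq lam i : ℝ) := hle
      _ ≤ (⌈lam * (aSeq lam i : ℝ)⌉₊ : ℝ) := Nat.le_ceil _
      _ = (aSeq lam (i+1) : ℝ) := by rfl

lemma aSeq_summable {lam : ℝ} (h : 1 < lam) :
    Summable (fun i => (1 : ℝ) / (aSeq lam i)) := by
  have hpos : (0:ℝ) < lam := by linarith
  have hg : Summable (fun i : ℕ => (1/lam) ^ i) := by
    apply summable_geometric_of_lt_one (by positivity)
    rw [div_lt_one hpos]; linarith
  apply Summable.of_nonneg_of_le (fun i => by positivity) _ hg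
  intro i
  have hp : (0:ℝ) < lam ^ i := by positivity
  have ha : lam ^ i ≤ (aSeq lam i : ℝ) := aSeq_ge_pow h.le i
  rw [one_div_pow]
  exact one_div_le_one_div_of_le hp ha

lemma aSeq_le {N : ℕ} (hN : 0 < N) {lam : ℝ} (h1 : 1 < lam) (h2 : lam ≤ 1 + 1/N) :
    ∀ i ≤ N, aSeq lam i ≤ i + 1 := by
  intro i
  induction i with
  | zero => intro _; simp [aSeq]
  | succ i ih =>
    intro hiN
    have hi : i ≤ N := Nat.le_of_succ_le hiN
    have ha := ih hi
    have hai : (aSeq lam i : ℝ) ≤ (i:ℝ) + 1 := by exact_mod_cast ha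
    have hNpos : (0:ℝ) < N := by exact_mod_cast hN
    have h1N : ((i:ℝ)+1) ≤ N := by exact_mod_cast hiN
    have hanneg : (0:ℝ) ≤ (aSeq lam i : ℝ) := by positivity
    have hmul : lam * (aSeq lam i : ℝ) ≤ (1 + 1/N) * ((i:ℝ)+1) :=
      mul_le_mul h2 hai hanneg (by positivity)
    have hdiv : ((i:ℝ)+1)/N ≤ 1 := by rw [div_le_one hNpos]; exact h1N
    have key : (1 + 1/(N:ℝ)) * ((i:ℝ)+1) = ((i:ℝ)+1) + ((i:ℝ)+1)/N := by ring
    have : lam * (aSeq lam i : ℝ) ≤ ((i:ℝ)+1) + 1 := by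
      rw [key] at hmul; linarith
    simp only [aSeq]
    rw [Nat.ceil_le]
    push_cast
    linarith

/-- With `R(λ) := ∑_i 1 / a_i(λ)`, where `a₁(λ) = 1` and
`a_{i+1}(λ) = ⌈λ a_i(λ)⌉`, the quantity `R(λ)` tends to `+∞` as `λ → 1⁺`
(within the interval `(1, 2)`). -/
theorem stmt5 :
    Tendsto (fun lam : ℝ => ∑' i, (1 : ℝ) / (aSeq lam i))
      (nhdsWithin 1 (Set.Ioo (1 : ℝ) 2)) atTop := by
  rw [tendsto_atTop]
  intro C
  obtain ⟨N, hNsum⟩ :=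
    (Real.tendsto_sum_range_one_div_nat_succ_atTop.eventually_ge_atTop C).exists
  set M := N + 1 with hM
  have hMpos : 0 < M := Nat.succ_pos N
  have hlt : (1:ℝ) < 1 + 1/M := by
    have : (0:ℝ) < (M:ℝ) := by exact_mod_cast hMpos
    have : (0:ℝ) < 1/(M:ℝ) := by positivity
    linarith
  filter_upwards [self_mem_nhdsWithin, nhdsWithin_le_nhds (gt_mem_nhds hlt)]
    with lam hlam hlam2
  have h1 : 1 < lam := hlam.1
  have hle : lam ≤ 1 + 1/M := le_of_lt hlam2
  have hbound := aSeq_le hMpos h1 hle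
  have hsum := aSeq_summable h1
  have step1 : ∑ i ∈ Finset.range (M+1), (1:ℝ)/(i+1) ≤
      ∑ i ∈ Finset.range (M+1), (1:ℝ)/(aSeq lam i) := by
    apply Finset.sum_le_sum
    intro i hi
    have hiM : i ≤ M := Nat.lt_succ_iff.mp (Finset.mem_range.mp hi)
    have hai : (aSeq lam i : ℝ) ≤ (i:ℝ) + 1 := by exact_mod_cast hbound i hiM
    have hapos : (0:ℝ) < (aSeq lam i : ℝ) := by exact_mod_cast aSeq_pos h1.le i
    exact one_div_le_one_div_of_le hapos hai
  have step2 : ∑ i ∈ Finset.range (M+1), (1:ℝ)/(aSeq lam i) ≤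
      ∑' i, (1:ℝ)/(aSeq lam i) :=
    Summable.sum_le_tsum _ (fun i _ => by positivity) hsum
  have step0 : ∑ i ∈ Finset.range N, (1:ℝ)/(i+1) ≤
      ∑ i ∈ Finset.range (M+1), (1:ℝ)/(i+1) := by
    apply Finset.sum_le_sum_of_subset_of_nonneg
    · exact Finset.range_subset_range.mpr (by omega)
    · intro i _ _; positivity
  linarith
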